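/- With α₁, α₂ as above and φ(u) = u + f(u)/(b u(α₁-α₂) - d_u) (defined where the denominator is nonzero), a point (u₁, v₁, u₂, v₂) with b u₁(α₁-α₂) ≠ d_u and b u₂(α₁-α₂) ≠ d_u is an equilibrium of the 2×2 coupled system if and only if u₂ = φ(u₁), u₁ = φ(u₂), v₁ = α₁u₁ + α₂u₂, v₂ = α₁u₂ + α₂u₁; in particular u₁ is then a fixed point of φ∘φ. -/

import Mathlib

/-! Solving the two linear `v`-equations expresses `v₁, v₂` through `u₁, u₂`, and then
`v₂ - v₁ = (α₁ - α₂)(u₂ - u₁)`. Substituted into the `u`-equations this gives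
`f u₁ = (b u₁ (α₁ - α₂) - d_u)(u₂ - u₁)` and its mirror image, which, the factor being
nonzero, say exactly `u₂ = φ u₁` and `u₁ = φ u₂`. -/

section Field

variable {K : Type*} [Field K]

theorem eq_add_div_iff_sub_mul_sub_eq_zero {x y F D : K} (hD : D ≠ 0) :
    y = x + F / D ↔ F - D * (y - x) = 0 := by
  rw [eq_comm, ← eq_sub_iff_add_eq', div_eq_iff hD, sub_eq_zero, mul_comm]

theorem coupled_linear_equations_iff {c e dv α₁ α₂ u₁ u₂ v₁ v₂ : K}
    (he : e ≠ 0) (hedv : e + 2 * dv ≠ 0)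
    (hα₁ : α₁ = c * (dv + e) / (e * (e + 2 * dv)))
    (hα₂ : α₂ = c * dv / (e * (e + 2 * dv))) :
    (c * u₁ - e * v₁ + dv * (v₂ - v₁) = 0 ∧ c * u₂ - e * v₂ + dv * (v₁ - v₂) = 0) ↔
      (v₁ = α₁ * u₁ + α₂ * u₂ ∧ v₂ = α₁ * u₂ + α₂ * u₁) := by
  have hE : e * (e + 2 * dv) ≠ 0 := mul_ne_zero he hedv
  have hv : ∀ v u u' : K, v = α₁ * u + α₂ * u' ↔
      e * (e + 2 * dv) * v = c * (dv + e) * u + c * dv * u' := fun v u u' => by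
    rw [hα₁, hα₂, div_mul_eq_mul_div, div_mul_eq_mul_div, ← add_div, eq_div_iff hE,
      mul_comm]
  rw [hv, hv]
  constructor
  · rintro ⟨h₁, h₂⟩
    exact ⟨by linear_combination -(e + dv) * h₁ - dv * h₂,
      by linear_combination -dv * h₁ - (e + dv) * h₂⟩
  · rintro ⟨h₁, h₂⟩
    constructor <;> apply mul_left_cancel₀ hE
    · linear_combination -(e + dv) * h₁ + dv * h₂
    · linear_combination dv * h₁ - (e + dv) * h₂

end Field

theorem stmt_12_general (b c e du dv : ℝ)
    (he : 0 < e) (hdv : 0 < dv)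
    (f φ : ℝ → ℝ) (α₁ α₂ : ℝ)
    (hα₁ : α₁ = c * (dv + e) / (e * (e + 2 * dv)))
    (hα₂ : α₂ = c * dv / (e * (e + 2 * dv)))
    (hφ : ∀ x, φ x = x + f x / (b * x * (α₁ - α₂) - du))
    (u₁ v₁ u₂ v₂ : ℝ)
    (hden₁ : b * u₁ * (α₁ - α₂) ≠ du) (hden₂ : b * u₂ * (α₁ - α₂) ≠ du) :
    ((f u₁ - b * u₁ * (v₂ - v₁) + du * (u₂ - u₁) = 0 ∧
      c * u₁ - e * v₁ + dv * (v₂ - v₁) = 0 ∧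
      f u₂ - b * u₂ * (v₁ - v₂) + du * (u₁ - u₂) = 0 ∧
      c * u₂ - e * v₂ + dv * (v₁ - v₂) = 0) ↔
     (u₂ = φ u₁ ∧ u₁ = φ u₂ ∧
      v₁ = α₁ * u₁ + α₂ * u₂ ∧ v₂ = α₁ * u₂ + α₂ * u₁)) ∧
    ((f u₁ - b * u₁ * (v₂ - v₁) + du * (u₂ - u₁) = 0 ∧
      c * u₁ - e * v₁ + dv * (v₂ - v₁) = 0 ∧
      f u₂ - b * u₂ * (v₁ - v₂) + du * (u₁ - u₂) = 0 ∧
      c * u₂ - e * v₂ + dv * (v₁ - v₂) = 0) → u₁ = φ (φ u₁)) := by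
  have hlin := coupled_linear_equations_iff (u₁ := u₁) (u₂ := u₂) (v₁ := v₁) (v₂ := v₂)
    he.ne' (by positivity) hα₁ hα₂
  refine (and_iff_left_of_imp fun key h => ?_).mpr ?_
  · obtain ⟨hu₂, hu₁, -, -⟩ := key.mp h
    rw [← hu₂, ← hu₁]
  rw [hφ, hφ, eq_add_div_iff_sub_mul_sub_eq_zero (sub_ne_zero.mpr hden₁),
    eq_add_div_iff_sub_mul_sub_eq_zero (sub_ne_zero.mpr hden₂)]
  constructor
  · rintro ⟨h₁, hv₁, h₂, hv₂⟩
    obtain ⟨rfl, rfl⟩ := hlin.mp ⟨hv₁, hv₂⟩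
    exact ⟨by linear_combination h₁, by linear_combination h₂, rfl, rfl⟩
  · rintro ⟨h₁, h₂, rfl, rfl⟩
    obtain ⟨hv₁, hv₂⟩ := hlin.mpr ⟨rfl, rfl⟩
    exact ⟨by linear_combination h₁, hv₁, by linear_combination h₂, hv₂⟩

/-- With `α₁ = c(d_v+e)/(e(e+2d_v))`, `α₂ = c d_v/(e(e+2d_v))` and
`φ u = u + f(u)/(b u (α₁-α₂) - d_u)`, a point `(u₁,v₁,u₂,v₂)` with nonvanishing
denominators is an equilibrium of the 2×2 coupled system iff `u₂ = φ u₁`,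
`u₁ = φ u₂`, `v₁ = α₁u₁ + α₂u₂`, `v₂ = α₁u₂ + α₂u₁`; in particular `u₁` is then
a fixed point of `φ ∘ φ`. -/
theorem stmt_12 (a b c e du dv γ : ℝ) (ha : 0 < a) (hb : 0 < b) (hc : 0 < c)
    (he : 0 < e) (hdu : 0 < du) (hdv : 0 < dv)
    (f φ : ℝ → ℝ) (α₁ α₂ : ℝ)
    (hf : ∀ x, f x = a * x * (1 - x) * (x - γ))
    (hα₁ : α₁ = c * (dv + e) / (e * (e + 2 * dv)))
    (hα₂ : α₂ = c * dv / (e * (e + 2 * dv)))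
    (hφ : ∀ x, φ x = x + f x / (b * x * (α₁ - α₂) - du))
    (u₁ v₁ u₂ v₂ : ℝ)
    (hden₁ : b * u₁ * (α₁ - α₂) ≠ du) (hden₂ : b * u₂ * (α₁ - α₂) ≠ du) :
    ((f u₁ - b * u₁ * (v₂ - v₁) + du * (u₂ - u₁) = 0 ∧
      c * u₁ - e * v₁ + dv * (v₂ - v₁) = 0 ∧
      f u₂ - b * u₂ * (v₁ - v₂) + du * (u₁ - u₂) = 0 ∧
      c * u₂ - e * v₂ + dv * (v₁ - v₂) = 0) ↔
     (u₂ = φ u₁ ∧ u₁ = φ u₂ ∧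
      v₁ = α₁ * u₁ + α₂ * u₂ ∧ v₂ = α₁ * u₂ + α₂ * u₁)) ∧
    ((f u₁ - b * u₁ * (v₂ - v₁) + du * (u₂ - u₁) = 0 ∧
      c * u₁ - e * v₁ + dv * (v₂ - v₁) = 0 ∧
      f u₂ - b * u₂ * (v₁ - v₂) + du * (u₁ - u₂) = 0 ∧
      c * u₂ - e * v₂ + dv * (v₁ - v₂) = 0) → u₁ = φ (φ u₁)) :=
  stmt_12_general b c e du dv he hdv f φ α₁ α₂ hα₁ hα₂ hφ u₁ v₁ u₂ v₂ hden₁ hden₂
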